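/- Assume Constraint I. Set A := (4/√3)·ln(1/ε) and L := ℓ·n/ε. Then Φ is differentiable on (0,1), and for all λ ∈ (0,1), Φ′(λ) ≥ −Φ(λ)·(A + 1/(λ·(L·λ + 1))) + (1−δ)·A·(1 + 1/(L·λ)). -/

import Mathlib

/-- The degree-`d` Chebyshev polynomial of the first kind, as a real function. -/
noncomputable def cheb : ℕ → ℝ → ℝ
  | 0, _ => 1
  | 1, x => x
  | (n+2), x => 2 * x * cheb (n+1) x - cheb n x

/-- `ψ(x) = (r+ℓ−2x)/(r−ℓ)`. -/
noncomputable def psiMap (ℓ r x : ℝ) : ℝ := (r + ℓ - 2 * x) / (r - ℓ)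

/-- `δ = 1 / T_d(1 + 2α/(1−α))` where `α = ℓ/r`. -/
noncomputable def cDelta (ℓ r : ℝ) (d : ℕ) : ℝ :=
  1 / cheb d (1 + 2 * (ℓ / r) / (1 - ℓ / r))

/-- `P_d(x) = −δ·T_d(ψ(x))`. -/
noncomputable def Pd (ℓ r : ℝ) (d : ℕ) (x : ℝ) : ℝ := - cDelta ℓ r d * cheb d (psiMap ℓ r x)

/-- `Q(x) = 1 + e^{−mx}·P_d(x)`. -/
noncomputable def Qfun (ℓ r : ℝ) (d : ℕ) (m x : ℝ) : ℝ :=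
  1 + Real.exp (-(m * x)) * Pd ℓ r d x

/-- `Q*(x) = 1 + P_d(x)` for `x < ℓ` and `1 − δ` for `x ≥ ℓ`. -/
noncomputable def Qstar (ℓ r : ℝ) (d : ℕ) (x : ℝ) : ℝ :=
  if x < ℓ then 1 + Pd ℓ r d x else 1 - cDelta ℓ r d

/-- Constraint I: `r ≥ 3ℓ` and `d ≥ 4·√((r−ℓ)/(2ℓ))·ln(20/ε)`. -/
def ConstraintI (ℓ r : ℝ) (d : ℕ) (ε : ℝ) : Prop :=
  r ≥ 3 * ℓ ∧ (d : ℝ) ≥ 4 * Real.sqrt ((r - ℓ) / (2 * ℓ)) * Real.log (20 / ε)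

/-- Constraint II: `m ≥ 5.5·d/(r−ℓ)`. -/
def ConstraintII (ℓ r : ℝ) (d : ℕ) (m : ℝ) : Prop :=
  m ≥ 5.5 * d / (r - ℓ)

/-- Constraint III: `m ≤ ε²n²/256` and
`d⁶·9^d·((r+ℓ)/(r−ℓ))^{2d−2} ≤ (1/4)·m·(r−ℓ)²·n²`. -/
def ConstraintIII (ℓ r : ℝ) (d : ℕ) (m ε : ℝ) (n : ℕ) : Prop :=
  m ≤ ε ^ 2 * (n : ℝ) ^ 2 / 256 ∧
  (d : ℝ) ^ 6 * 9 ^ d * ((r + ℓ) / (r - ℓ)) ^ (2 * d - 2) ≤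
    (1 / 4) * m * (r - ℓ) ^ 2 * (n : ℝ) ^ 2

/-- Constraint IV: `ℓ ≤ ε/(20n)`. -/
def ConstraintIV (ℓ ε : ℝ) (n : ℕ) : Prop := ℓ ≤ ε / (20 * n)

/-- Constraint IVb: `ℓ ≤ (1/3)·(ε/n)·log₂(1/ε)`. -/
def ConstraintIVb (ℓ ε : ℝ) (n : ℕ) : Prop :=
  ℓ ≤ (1 / 3) * (ε / n) * Real.logb 2 (1 / ε)

/-- A probability distribution over `ℕ`: a nonnegative sequence summing to `1`. -/
def IsDist (p : ℕ → ℝ) : Prop := (∀ i, 0 ≤ p i) ∧ ∑' i, p i = 1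

/-- Total variation distance `(1/2)·Σᵢ|p_i − q_i|`. -/
noncomputable def dTV (p q : ℕ → ℝ) : ℝ := (1 / 2) * ∑' i, |p i - q i|

/-- `p` is `ε`-far from having support size at most `n`. -/
def FarFromSuppSize (ε : ℝ) (n : ℕ) (p : ℕ → ℝ) : Prop :=
  ∀ q : ℕ → ℝ, IsDist q → {i | q i ≠ 0}.encard ≤ n → dTV p q > ε

/-- `Φ(λ) = (1 + ε/(λ·ℓ·n))·Q*(λ·ℓ)`. -/
noncomputable def Phi (ℓ r : ℝ) (d : ℕ) (ε : ℝ) (n : ℕ) (lam : ℝ) : ℝ :=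
  (1 + ε / (lam * ℓ * n)) * Qstar ℓ r d (lam * ℓ)

lemma cheb_cosh (n : ℕ) (t : ℝ) : cheb n (Real.cosh t) = Real.cosh (n * t) := by
  induction n using Nat.twoStepInduction with
  | zero => simp [cheb]
  | one => simp [cheb]
  | more n ih1 ih2 =>
    have h : ((n:ℝ)+2) * t = ((n+1) * t) + t := by ring
    rw [show cheb (n+2) (Real.cosh t)
        = 2 * Real.cosh t * cheb (n+1) (Real.cosh t) - cheb n (Real.cosh t) from rfl,
      ih1, ih2]
    push_cast
    rw [h, Real.cosh_add]
    have h2 : (n:ℝ) * t = ((n+1) * t) - t := by ring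
    rw [h2, Real.cosh_sub]
    ring

lemma cheb_differentiable (n : ℕ) : Differentiable ℝ (cheb n) := by
  induction n using Nat.twoStepInduction with
  | zero => simpa [cheb] using differentiable_const (1:ℝ)
  | one => simpa [cheb] using differentiable_id
  | more n ih1 ih2 =>
    have h : cheb (n+2) = fun x => 2 * x * cheb (n+1) x - cheb n x := rfl
    rw [h]
    exact (((differentiable_const 2).mul differentiable_id).mul ih2).sub ih1

lemma cheb_deriv_cosh (n : ℕ) (t : ℝ) :
    deriv (cheb n) (Real.cosh t) * Real.sinh t = n * Real.sinh ((n:ℝ) * t) := by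
  have h1 : HasDerivAt (fun s => cheb n (Real.cosh s))
      (deriv (cheb n) (Real.cosh t) * Real.sinh t) t :=
    (((cheb_differentiable n) (Real.cosh t)).hasDerivAt).comp t (Real.hasDerivAt_cosh t)
  have h2 : HasDerivAt (fun s : ℝ => Real.cosh ((n:ℝ) * s)) (Real.sinh ((n:ℝ)*t) * ((n:ℝ)*1)) t :=
    (Real.hasDerivAt_cosh ((n:ℝ)*t)).comp t ((hasDerivAt_id t).const_mul (n:ℝ))
  have heq : (fun s => cheb n (Real.cosh s)) = fun s : ℝ => Real.cosh ((n:ℝ) * s) :=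
    funext fun s => cheb_cosh n s
  rw [heq] at h1
  have h3 := h1.unique h2
  rw [h3]; ring

lemma exists_cosh {y : ℝ} (hy : 1 ≤ y) :
    ∃ t, 0 ≤ t ∧ Real.cosh t = y ∧ Real.sinh t = Real.sqrt (y^2 - 1) := by
  set t := Real.arsinh (Real.sqrt (y^2-1)) with ht
  have hs : Real.sinh t = Real.sqrt (y^2-1) := Real.sinh_arsinh _
  have hsq : Real.cosh t ^ 2 = y ^ 2 := by
    rw [Real.cosh_sq, hs, Real.sq_sqrt (by nlinarith)]; ring
  have habs : |Real.cosh t| = |y| := by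
    rw [← Real.sqrt_sq_eq_abs, ← Real.sqrt_sq_eq_abs, hsq]
  have hc : Real.cosh t = y := by
    rwa [abs_of_pos (Real.cosh_pos t), abs_of_pos (by linarith)] at habs
  exact ⟨t, Real.arsinh_nonneg_iff.2 (Real.sqrt_nonneg _), hc, hs⟩

lemma cheb_ge_one (n : ℕ) {y : ℝ} (hy : 1 ≤ y) : 1 ≤ cheb n y := by
  obtain ⟨t, _, hc, _⟩ := exists_cosh hy
  rw [← hc, cheb_cosh]
  exact Real.one_le_cosh _

lemma key_ineq (ℓ r A : ℝ) (hℓ : 0 < ℓ) (hℓr : ℓ < r) (hA : 0 ≤ A) (d : ℕ)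
    (hdA : A * Real.sqrt (r/ℓ) ≤ (d:ℝ)) {y : ℝ} (hy1 : 1 < y) (hy2 : y ≤ (r+ℓ)/(r-ℓ)) :
    A * (cheb d y - 1) ≤ (2*ℓ/(r-ℓ)) * deriv (cheb d) y := by
  obtain ⟨t, ht0, hc, hs⟩ := exists_cosh hy1.le
  have hrl : 0 < r - ℓ := by linarith
  have hspos : 0 < Real.sinh t := by
    rw [hs]; exact Real.sqrt_pos.2 (by nlinarith)
  have hsle : Real.sinh t ≤ 2 * Real.sqrt (r*ℓ) / (r-ℓ) := by
    rw [hs]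
    have h1 : y^2 - 1 ≤ ((r+ℓ)/(r-ℓ))^2 - 1 := by
      have : (1:ℝ) ≤ (r+ℓ)/(r-ℓ) := by
        rw [le_div_iff₀ hrl]; linarith
      nlinarith
    have h2 : ((r+ℓ)/(r-ℓ))^2 - 1 = (2 * Real.sqrt (r*ℓ) / (r-ℓ))^2 := by
      rw [div_pow, div_pow, mul_pow, Real.sq_sqrt (show (0:ℝ) ≤ r*ℓ by nlinarith)]
      field_simp
      ring
    calc Real.sqrt (y^2-1) ≤ Real.sqrt (((r+ℓ)/(r-ℓ))^2 - 1) := Real.sqrt_le_sqrt h1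
      _ = 2 * Real.sqrt (r*ℓ) / (r-ℓ) := by
          rw [h2, Real.sqrt_sq (div_nonneg (by positivity) hrl.le)]
  have hsqrt1 : Real.sqrt (r/ℓ) * Real.sqrt (ℓ/r) = 1 := by
    rw [← Real.sqrt_mul (div_pos (hℓ.trans hℓr) hℓ).le,
      show r/ℓ * (ℓ/r) = 1 by field_simp [hℓ.ne', (hℓ.trans hℓr).ne'], Real.sqrt_one]
  have hAd : A ≤ (d:ℝ) * Real.sqrt (ℓ/r) := by
    have h := mul_le_mul_of_nonneg_right hdA (Real.sqrt_nonneg (ℓ/r))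
    rwa [mul_assoc, hsqrt1, mul_one] at h
  have hsqrt2 : Real.sqrt (ℓ/r) * Real.sqrt (r*ℓ) = ℓ := by
    rw [← Real.sqrt_mul (div_pos hℓ (hℓ.trans hℓr)).le,
      show ℓ/r * (r*ℓ) = ℓ^2 by field_simp [(hℓ.trans hℓr).ne'], Real.sqrt_sq hℓ.le]
  have hDs := cheb_deriv_cosh d t
  have hcosh : cheb d y = Real.cosh ((d:ℝ)*t) := by rw [← hc, cheb_cosh]
  have hdt0 : (0:ℝ) ≤ (d:ℝ) * t := mul_nonneg (Nat.cast_nonneg d) ht0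
  have hS0 : 0 ≤ Real.sinh ((d:ℝ)*t) := Real.sinh_nonneg_iff.2 hdt0
  have hch_le : Real.cosh ((d:ℝ)*t) - 1 ≤ Real.sinh ((d:ℝ)*t) := by
    have h1 := Real.cosh_sub_sinh ((d:ℝ)*t)
    have h2 : Real.exp (-((d:ℝ)*t)) ≤ 1 := Real.exp_le_one_iff.2 (by linarith)
    linarith
  rw [← mul_le_mul_iff_of_pos_right hspos]
  have hR : (2*ℓ/(r-ℓ)) * deriv (cheb d) y * Real.sinh t
      = (2*ℓ/(r-ℓ)) * ((d:ℝ) * Real.sinh ((d:ℝ)*t)) := by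
    rw [mul_assoc, ← hc, hDs]
  rw [hR, hcosh]
  have step1 : A * (Real.cosh ((d:ℝ)*t) - 1) * Real.sinh t
      ≤ A * Real.sinh ((d:ℝ)*t) * Real.sinh t :=
    mul_le_mul_of_nonneg_right (mul_le_mul_of_nonneg_left hch_le hA) hspos.le
  have h1 : 0 ≤ (d:ℝ) * Real.sqrt (ℓ/r) := le_trans hA hAd
  have step2 : A * Real.sinh ((d:ℝ)*t) * Real.sinh t
      ≤ ((d:ℝ) * Real.sqrt (ℓ/r)) * Real.sinh ((d:ℝ)*t) * (2 * Real.sqrt (r*ℓ) / (r-ℓ)) := by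
    nlinarith [mul_le_mul hAd hsle hspos.le h1, hS0]
  have step3 : ((d:ℝ) * Real.sqrt (ℓ/r)) * Real.sinh ((d:ℝ)*t) * (2 * Real.sqrt (r*ℓ) / (r-ℓ))
      = (2*ℓ/(r-ℓ)) * ((d:ℝ) * Real.sinh ((d:ℝ)*t)) := by
    have h4 : ((d:ℝ) * Real.sqrt (ℓ/r)) * Real.sinh ((d:ℝ)*t) * (2 * Real.sqrt (r*ℓ) / (r-ℓ))
        = 2 * (Real.sqrt (ℓ/r) * Real.sqrt (r*ℓ)) * ((d:ℝ) * Real.sinh ((d:ℝ)*t)) / (r-ℓ) := by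
      ring
    rw [h4, hsqrt2]; ring
  linarith

lemma ident_lemma (lam ℓ nn ε δ C A : ℝ) (h1 : lam ≠ 0) (h2 : ℓ ≠ 0) (h3 : nn ≠ 0)
    (h4 : ε ≠ 0) (h5 : ℓ*nn*lam + ε ≠ 0) :
    -((1 + ε/(lam*ℓ*nn)) * (1 + (-δ)*C)) * (A + 1/(lam*((ℓ*nn/ε)*lam+1)))
      + (1-δ)*A*(1+1/((ℓ*nn/ε)*lam))
    = (0*(lam*ℓ*nn) - ε*(1*ℓ*nn))/(lam*ℓ*nn)^2 * (1 + (-δ)*C)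
      + (1 + ε/(lam*ℓ*nn)) * (A*(δ*(C-1))) := by
  have e1 : (ℓ*nn/ε)*lam + 1 = (ℓ*nn*lam + ε)/ε := by field_simp
  rw [e1]
  have h5' : lam*ℓ*nn + ε ≠ 0 := by rwa [show lam*ℓ*nn = ℓ*nn*lam by ring]
  field_simp
  ring

set_option maxHeartbeats 1000000 in
/-- Under Constraint I, with `A := (4/√3)·ln(1/ε)` and `L := ℓ·n/ε`, `Φ` is
differentiable on `(0,1)` and satisfies the stated differential inequality there. -/
theorem phi_differential_inequality (ℓ r : ℝ) (hℓ : 0 < ℓ) (hℓr : ℓ < r) (hr : r ≤ 1)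
    (d : ℕ) (hd : 1 ≤ d) (ε : ℝ) (hε0 : 0 < ε) (hε1 : ε < 1) (n : ℕ) (hn : 1 ≤ n)
    (hCI : ConstraintI ℓ r d ε) :
    ∀ lam ∈ Set.Ioo (0 : ℝ) 1,
      DifferentiableAt ℝ (Phi ℓ r d ε n) lam ∧
      deriv (Phi ℓ r d ε n) lam ≥
        -(Phi ℓ r d ε n lam) *
            ((4 / Real.sqrt 3) * Real.log (1 / ε) +
              1 / (lam * ((ℓ * n / ε) * lam + 1))) +
          (1 - cDelta ℓ r d) * ((4 / Real.sqrt 3) * Real.log (1 / ε)) *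
            (1 + 1 / ((ℓ * n / ε) * lam)) := by
  intro lam hlam
  obtain ⟨hl0, hl1⟩ := hlam
  have hr0 : 0 < r := hℓ.trans hℓr
  have hrl : 0 < r - ℓ := by linarith
  have hn0 : (0:ℝ) < n := by exact_mod_cast Nat.lt_of_lt_of_le Nat.zero_lt_one hn
  set A : ℝ := (4 / Real.sqrt 3) * Real.log (1 / ε) with hA_def
  have hlog0 : 0 ≤ Real.log (1/ε) := Real.log_nonneg (one_le_one_div hε0 hε1.le)
  have hA0 : 0 ≤ A := mul_nonneg (by positivity) hlog0
  -- δ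
  have hYeq : 1 + 2 * (ℓ / r) / (1 - ℓ / r) = (r+ℓ)/(r-ℓ) := by
    have h1 : (1:ℝ) - ℓ/r = (r-ℓ)/r := by field_simp
    rw [h1]
    field_simp
    ring
  have hY1 : (1:ℝ) ≤ (r+ℓ)/(r-ℓ) := by rw [le_div_iff₀ hrl]; linarith
  have hchebY : 1 ≤ cheb d ((r+ℓ)/(r-ℓ)) := cheb_ge_one d hY1
  have hδ_def : cDelta ℓ r d = 1 / cheb d ((r+ℓ)/(r-ℓ)) := by rw [cDelta, hYeq]
  have hδpos : 0 < cDelta ℓ r d := by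
    rw [hδ_def]; exact one_div_pos.2 (by linarith)
  -- d ≥ A √(r/ℓ)
  have hdA : A * Real.sqrt (r/ℓ) ≤ (d:ℝ) := by
    obtain ⟨hCI1, hCI2⟩ := hCI
    have hlog2 : Real.log (1/ε) ≤ Real.log (20/ε) := by
      apply Real.log_le_log (by positivity)
      gcongr
      norm_num
    have h1 : A * Real.sqrt (r/ℓ) = 4 * Real.sqrt (r/ℓ/3) * Real.log (1/ε) := by
      rw [hA_def, Real.sqrt_div (le_of_lt (div_pos hr0 hℓ)) 3]
      have h3 : Real.sqrt 3 ≠ 0 := by positivity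
      field_simp
    have h2 : Real.sqrt (r/ℓ/3) ≤ Real.sqrt ((r-ℓ)/(2*ℓ)) := by
      apply Real.sqrt_le_sqrt
      rw [div_div, div_le_div_iff₀ (by positivity) (by positivity)]
      nlinarith
    calc A * Real.sqrt (r/ℓ) = 4 * Real.sqrt (r/ℓ/3) * Real.log (1/ε) := h1
      _ ≤ 4 * Real.sqrt ((r-ℓ)/(2*ℓ)) * Real.log (20/ε) :=
          mul_le_mul (by linarith) hlog2 hlog0 (by positivity)
      _ ≤ (d:ℝ) := hCI2
  -- the point y
  set yv : ℝ := (r + ℓ - 2*(lam*ℓ))/(r-ℓ) with hyv_def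
  have hy1 : 1 < yv := by
    rw [hyv_def, lt_div_iff₀ hrl]
    nlinarith
  have hy2 : yv ≤ (r+ℓ)/(r-ℓ) := by
    rw [hyv_def, div_le_div_iff₀ hrl hrl]
    nlinarith [mul_pos hl0 hℓ]
  set δ : ℝ := cDelta ℓ r d with hδ
  set C : ℝ := cheb d yv with hC_def
  set D : ℝ := deriv (cheb d) yv with hD_def
  have hkey : A * (C - 1) ≤ (2*ℓ/(r-ℓ)) * D := key_ineq ℓ r A hℓ hℓr hA0 d hdA hy1 hy2
  -- the smooth local representative
  set F : ℝ → ℝ := fun l => (1 + ε / (l * ℓ * ↑n)) *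
      (1 + (-δ) * cheb d ((r + ℓ - 2*(l*ℓ))/(r-ℓ))) with hF_def
  have hev : Phi ℓ r d ε n =ᶠ[nhds lam] F := by
    filter_upwards [Ioo_mem_nhds hl0 hl1] with x hx
    have hxl : x * ℓ < ℓ := mul_lt_of_lt_one_left hℓ hx.2
    show (1 + ε / (x * ℓ * ↑n)) * Qstar ℓ r d (x * ℓ) = _
    rw [Qstar, if_pos hxl]
    simp only [Pd, psiMap, hδ]
    rfl
  -- derivative computation
  have hlℓn : lam * ℓ * (n:ℝ) ≠ 0 := by positivity
  have hden : HasDerivAt (fun l : ℝ => l * ℓ * (n:ℝ)) (1 * ℓ * (n:ℝ)) lam :=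
    ((hasDerivAt_id lam).mul_const ℓ).mul_const (n:ℝ)
  have hgdiv : HasDerivAt (fun l : ℝ => ε / (l * ℓ * ↑n))
      ((0 * (lam * ℓ * ↑n) - ε * (1 * ℓ * ↑n)) / (lam * ℓ * ↑n)^2) lam :=
    (hasDerivAt_const lam ε).div hden hlℓn
  have hg : HasDerivAt (fun l : ℝ => 1 + ε / (l * ℓ * ↑n))
      ((0 * (lam * ℓ * ↑n) - ε * (1 * ℓ * ↑n)) / (lam * ℓ * ↑n)^2) lam := hgdiv.const_add 1
  have hu : HasDerivAt (fun l : ℝ => (r + ℓ - 2*(l*ℓ))/(r-ℓ)) (-(2*(1*ℓ))/(r-ℓ)) lam :=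
    ((((hasDerivAt_id lam).mul_const ℓ).const_mul 2).const_sub (r+ℓ)).div_const (r-ℓ)
  have hcheb : HasDerivAt (fun l : ℝ => cheb d ((r + ℓ - 2*(l*ℓ))/(r-ℓ)))
      (D * (-(2*(1*ℓ))/(r-ℓ))) lam :=
    (((cheb_differentiable d) yv).hasDerivAt).comp lam hu
  have hQ : HasDerivAt (fun l : ℝ => 1 + (-δ) * cheb d ((r + ℓ - 2*(l*ℓ))/(r-ℓ)))
      ((-δ) * (D * (-(2*(1*ℓ))/(r-ℓ)))) lam := (hcheb.const_mul (-δ)).const_add 1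
  have hFd : HasDerivAt F
      ((0 * (lam * ℓ * ↑n) - ε * (1 * ℓ * ↑n)) / (lam * ℓ * ↑n)^2 * (1 + (-δ) * C)
        + (1 + ε / (lam * ℓ * ↑n)) * ((-δ) * (D * (-(2*(1*ℓ))/(r-ℓ))))) lam := hg.mul hQ
  have hdiff : DifferentiableAt ℝ (Phi ℓ r d ε n) lam :=
    hev.differentiableAt_iff.2 hFd.differentiableAt
  refine ⟨hdiff, ?_⟩
  have hderiv_eq : deriv (Phi ℓ r d ε n) lam =
      (0 * (lam * ℓ * ↑n) - ε * (1 * ℓ * ↑n)) / (lam * ℓ * ↑n)^2 * (1 + (-δ) * C)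
        + (1 + ε / (lam * ℓ * ↑n)) * ((-δ) * (D * (-(2*(1*ℓ))/(r-ℓ)))) := by
    rw [hev.deriv_eq, hFd.deriv]
  have hPhi_eq : Phi ℓ r d ε n lam = (1 + ε / (lam * ℓ * ↑n)) * (1 + (-δ) * C) := by
    have hxl : lam * ℓ < ℓ := mul_lt_of_lt_one_left hℓ hl1
    show (1 + ε / (lam * ℓ * ↑n)) * Qstar ℓ r d (lam * ℓ) = _
    rw [Qstar, if_pos hxl]
    simp only [Pd, psiMap, hδ]
    rfl
  rw [hderiv_eq, hPhi_eq]
  have hgpos : 0 < 1 + ε / (lam * ℓ * ↑n) := by positivity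
  have hden2 : 0 < (ℓ * ↑n / ε) * lam + 1 := by positivity
  have ident := ident_lemma lam ℓ (↑n) ε δ C A hl0.ne' hℓ.ne' hn0.ne' hε0.ne' (by positivity)
  rw [ge_iff_le, ident]
  have hmul : (1 + ε / (lam * ℓ * ↑n)) * (A * (δ * (C - 1)))
      ≤ (1 + ε / (lam * ℓ * ↑n)) * ((-δ) * (D * (-(2*(1*ℓ))/(r-ℓ)))) := by
    have h5 : A * (δ * (C - 1)) ≤ (-δ) * (D * (-(2*(1*ℓ))/(r-ℓ))) := by
      have h6 : (-δ) * (D * (-(2*(1*ℓ))/(r-ℓ))) = δ * ((2*ℓ/(r-ℓ)) * D) := by ring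
      have h7 : A * (δ * (C - 1)) = δ * (A * (C - 1)) := by ring
      rw [h6, h7]
      exact mul_le_mul_of_nonneg_left hkey hδpos.le
    exact mul_le_mul_of_nonneg_left h5 hgpos.le
  linarith
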